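/- There exists a Borel probability measure μ on ℝ (absolutely continuous with respect to Lebesgue measure) such that −1, 1 ∈ supp(μ), liminf_{ε→0} μ(B(−1,ε))/μ(B(1,ε)) = 0, and limsup_{ε→0} μ(B(−1,ε))/μ(B(1,ε)) = ∞. -/

import Mathlib

open MeasureTheory Metric Filter Set Topology ENNReal

noncomputable section

/-- The topological support of a Borel measure on a metric space: the set of points all of
whose open balls have positive measure. -/
def measureSupport {X : Type*} [PseudoMetricSpace X] [MeasurableSpace X]
    (μ : Measure X) : Set X :=
  {x | ∀ r > 0, 0 < μ (Metric.ball x r)}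

/-- `I` is an Onsager--Machlup functional for `μ` on `E`: for all `x₁ x₂ ∈ E`, the ratio of
small-ball probabilities tends to `exp (I x₂ - I x₁)` as the radius tends to `0⁺`. -/
def IsOMFunctional {X : Type*} [PseudoMetricSpace X] [MeasurableSpace X]
    (μ : Measure X) (E : Set X) (I : X → ℝ) : Prop :=
  ∀ x₁ ∈ E, ∀ x₂ ∈ E,
    Filter.Tendsto (fun r : ℝ => μ (Metric.ball x₁ r) / μ (Metric.ball x₂ r))
      (𝓝[>] 0) (𝓝 (ENNReal.ofReal (Real.exp (I x₂ - I x₁))))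

/-- Property `M(μ, E)`: there is `x⋆ ∈ E` such that for every `x ∉ E` the small-ball
probability ratio `μ(B(x,r)) / μ(B(x⋆,r))` tends to `0` as `r → 0⁺`. -/
def PropertyM {X : Type*} [PseudoMetricSpace X] [MeasurableSpace X]
    (μ : Measure X) (E : Set X) : Prop :=
  ∃ xs ∈ E, ∀ x ∉ E,
    Filter.Tendsto (fun r : ℝ => μ (Metric.ball x r) / μ (Metric.ball xs r)) (𝓝[>] 0) (𝓝 0)

/-! Take radii `a k = 1 / (k + 1)!`, so that `a (k + 1) / a k → 0`, and let `μ` be normalised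
Lebesgue measure on the layers `(-1 + a (k + 1), -1 + a k)` for even `k` together with the layers
`(1 + a (k + 1), 1 + a k)` for odd `k`. For even `k`, the ball of radius `a k` about `-1` contains
a whole layer, of length `a k - a (k + 1)`, while inside the ball of the same radius about `1` all
mass lies within `a (k + 1)` of `1`; hence the ratio is at least `k + 1`. For odd `k` the roles of
`-1` and `1` are exchanged and the ratio is at most `1 / (k + 1)`. -/

open ProbabilityTheory

def rightLayers (c : ℝ) (a : ℕ → ℝ) (P : Set ℕ) : Set ℝ :=
  ⋃ k ∈ P, Ioo (c + a (k + 1)) (c + a k)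

section rightLayers

variable {a : ℕ → ℝ} (c c' : ℝ) (P : Set ℕ) {k : ℕ}

lemma measurableSet_rightLayers : MeasurableSet (rightLayers c a P) :=
  .biUnion (to_countable P) fun _ _ => measurableSet_Ioo

lemma Ioo_subset_rightLayers (hk : k ∈ P) :
    Ioo (c + a (k + 1)) (c + a k) ⊆ rightLayers c a P :=
  subset_biUnion_of_mem (u := fun k => Ioo (c + a (k + 1)) (c + a k)) hk

lemma rightLayers_subset_Ioo (ha : StrictAnti a) (ha_pos : ∀ k, 0 < a k) :
    rightLayers c a P ⊆ Ioo c (c + a 0) := by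
  simp only [rightLayers, iUnion_subset_iff]
  intro k _ x ⟨hx₁, hx₂⟩
  exact ⟨by linarith [ha_pos (k + 1)], hx₂.trans_le (by linarith [ha.antitone k.zero_le])⟩

lemma ball_inter_rightLayers_subset (ha : StrictAnti a) (ha_pos : ∀ k, 0 < a k) (hk : k ∉ P) :
    ball c (a k) ∩ rightLayers c a P ⊆ Ioo c (c + a (k + 1)) := by
  rintro x ⟨hx, hxP⟩
  simp only [rightLayers, mem_iUnion] at hxP
  obtain ⟨j, hj, hx₁, hx₂⟩ := hxP
  rw [Real.ball_eq_Ioo] at hx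
  have hkj : k < j + 1 := ha.lt_iff_gt.1 (by linarith [hx.2])
  have hkj' : k + 1 ≤ j := (Nat.lt_succ_iff.1 hkj).lt_of_ne (by rintro rfl; exact hk hj)
  exact ⟨by linarith [ha_pos (j + 1)], hx₂.trans_le (by linarith [ha.antitone hkj'])⟩

lemma volume_ball_inter_rightLayers_le (ha : StrictAnti a) (ha_pos : ∀ k, 0 < a k)
    (hk : k ∉ P) :
    volume (ball c (a k) ∩ rightLayers c a P) ≤ ENNReal.ofReal (a (k + 1)) := by
  calc volume (ball c (a k) ∩ rightLayers c a P) ≤ volume (Ioo c (c + a (k + 1))) :=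
        measure_mono (ball_inter_rightLayers_subset c P ha ha_pos hk)
    _ = ENNReal.ofReal (a (k + 1)) := by rw [Real.volume_Ioo, add_sub_cancel_left]

lemma ofReal_sub_le_volume_ball_inter_rightLayers (ha_pos : ∀ k, 0 < a k) (hk : k ∈ P) :
    ENNReal.ofReal (a k - a (k + 1)) ≤ volume (ball c (a k) ∩ rightLayers c a P) := by
  have hsub : Ioo (c + a (k + 1)) (c + a k) ⊆ ball c (a k) := by
    rw [Real.ball_eq_Ioo]
    exact Ioo_subset_Ioo_left (by linarith [ha_pos k, ha_pos (k + 1)])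
  calc ENNReal.ofReal (a k - a (k + 1)) = volume (Ioo (c + a (k + 1)) (c + a k)) := by
        rw [Real.volume_Ioo, add_sub_add_left_eq_sub]
    _ ≤ _ := measure_mono (subset_inter hsub (Ioo_subset_rightLayers c P hk))

lemma volume_ball_inter_rightLayers_pos (ha : StrictAnti a) (ha_pos : ∀ k, 0 < a k)
    (hlim : Tendsto a atTop (𝓝 0)) (hP : ∃ᶠ k in atTop, k ∈ P) {r : ℝ} (hr : 0 < r) :
    0 < volume (ball c r ∩ rightLayers c a P) := by
  obtain ⟨k, hkr, hk⟩ := ((hlim.eventually (gt_mem_nhds hr)).and_frequently hP).exists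
  calc (0 : ℝ≥0∞) < ENNReal.ofReal (a k - a (k + 1)) :=
        ENNReal.ofReal_pos.2 (sub_pos.2 (ha (Nat.lt_succ_self k)))
    _ ≤ volume (ball c (a k) ∩ rightLayers c a P) :=
        ofReal_sub_le_volume_ball_inter_rightLayers c P ha_pos hk
    _ ≤ volume (ball c r ∩ rightLayers c a P) :=
        measure_mono (inter_subset_inter_left _ (ball_subset_ball hkr.le))

lemma ofReal_div_le_volume_ratio (ha : StrictAnti a) (ha_pos : ∀ k, 0 < a k) (hk : k ∈ P) :
    ENNReal.ofReal (a k - a (k + 1)) / ENNReal.ofReal (a (k + 1)) ≤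
      volume (ball c (a k) ∩ rightLayers c a P) /
        volume (ball c' (a k) ∩ rightLayers c' a Pᶜ) :=
  ENNReal.div_le_div (ofReal_sub_le_volume_ball_inter_rightLayers c P ha_pos hk)
    (volume_ball_inter_rightLayers_le c' Pᶜ ha ha_pos (not_not.2 hk))

lemma volume_ratio_le_ofReal_div (ha : StrictAnti a) (ha_pos : ∀ k, 0 < a k) (hk : k ∉ P) :
    volume (ball c (a k) ∩ rightLayers c a P) /
        volume (ball c' (a k) ∩ rightLayers c' a Pᶜ) ≤
      ENNReal.ofReal (a (k + 1)) / ENNReal.ofReal (a k - a (k + 1)) :=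
  ENNReal.div_le_div (volume_ball_inter_rightLayers_le c P ha ha_pos hk)
    (ofReal_sub_le_volume_ball_inter_rightLayers c' Pᶜ ha_pos hk)

end rightLayers

lemma mem_measureSupport_cond {X : Type*} [PseudoMetricSpace X] [MeasurableSpace X]
    {μ : Measure X} {s : Set X} (hs : MeasurableSet s) (hμs : μ s ≠ ⊤) {x : X}
    (h : ∀ r > 0, 0 < μ (s ∩ ball x r)) : x ∈ measureSupport μ[|s] := fun r hr => by
  rw [cond_apply hs]
  exact ENNReal.mul_pos (ENNReal.inv_ne_zero.2 hμs) (h r hr).ne'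

section subsequence

variable {α β ι : Type*} [CompleteLinearOrder β] [TopologicalSpace β] [OrderTopology β]
  {f : α → β} {l : Filter α} {u : ι → α} {lu : Filter ι} [NeBot lu] {b : β}

lemma le_limsup_of_tendsto_comp (hu : Tendsto u lu l) (hf : Tendsto (f ∘ u) lu (𝓝 b)) :
    b ≤ limsup f l :=
  calc b = limsup (f ∘ u) lu := hf.limsup_eq.symm
    _ = limsup f (map u lu) := limsup_comp f u lu
    _ ≤ limsup f l := limsup_le_limsup_of_le hu

lemma liminf_le_of_tendsto_comp (hu : Tendsto u lu l) (hf : Tendsto (f ∘ u) lu (𝓝 b)) :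
    liminf f l ≤ b :=
  calc liminf f l ≤ liminf f (map u lu) := liminf_le_liminf_of_le hu
    _ = liminf (f ∘ u) lu := (liminf_comp f u lu).symm
    _ = b := hf.liminf_eq

end subsequence

open Nat in
def invFactSucc (k : ℕ) : ℝ := ((k + 1)! : ℝ)⁻¹

lemma invFactSucc_pos (k : ℕ) : 0 < invFactSucc k := by
  unfold invFactSucc; positivity

lemma invFactSucc_eq_mul_succ (k : ℕ) : invFactSucc k = (k + 2) * invFactSucc (k + 1) := by
  simp only [invFactSucc, Nat.factorial_succ (k + 1)]
  push_cast
  field_simp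
  ring

lemma strictAnti_invFactSucc : StrictAnti invFactSucc :=
  strictAnti_nat_of_succ_lt fun k => by
    rw [invFactSucc_eq_mul_succ k]
    nlinarith [invFactSucc_pos (k + 1)]

lemma tendsto_invFactSucc : Tendsto invFactSucc atTop (𝓝[>] 0) := by
  refine tendsto_nhdsWithin_iff.2 ⟨?_, .of_forall invFactSucc_pos⟩
  refine squeeze_zero (fun k => (invFactSucc_pos k).le) (fun k => ?_)
    tendsto_one_div_add_atTop_nhds_zero_nat
  rw [invFactSucc, one_div]
  gcongr
  exact_mod_cast Nat.self_le_factorial (k + 1)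

lemma ofReal_invFactSucc_sub_div (k : ℕ) :
    ENNReal.ofReal (invFactSucc k - invFactSucc (k + 1)) / ENNReal.ofReal (invFactSucc (k + 1))
      = ((k + 1 : ℕ) : ℝ≥0∞) := by
  have hpos := invFactSucc_pos (k + 1)
  rw [invFactSucc_eq_mul_succ k, show ((k : ℝ) + 2) * invFactSucc (k + 1) - invFactSucc (k + 1)
      = (k + 1 : ℕ) * invFactSucc (k + 1) by push_cast; ring,
    ENNReal.ofReal_mul (by positivity), ENNReal.ofReal_natCast,
    ENNReal.mul_div_cancel_right (by simpa using hpos) ENNReal.ofReal_ne_top]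

def oscillatingLayers : Set ℝ :=
  rightLayers (-1) invFactSucc {k | Even k} ∪ rightLayers 1 invFactSucc {k | Even k}ᶜ

lemma measurableSet_oscillatingLayers : MeasurableSet oscillatingLayers :=
  (measurableSet_rightLayers _ _).union (measurableSet_rightLayers _ _)

lemma rightLayers_invFactSucc_subset (c : ℝ) (P : Set ℕ) :
    rightLayers c invFactSucc P ⊆ Ioo c (c + 1) := by
  simpa [invFactSucc] using
    rightLayers_subset_Ioo c P strictAnti_invFactSucc invFactSucc_pos

lemma oscillatingLayers_subset_Ioo : oscillatingLayers ⊆ Ioo (-1) 2 :=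
  union_subset
    ((rightLayers_invFactSucc_subset _ _).trans (Ioo_subset_Ioo_right (by norm_num)))
    ((rightLayers_invFactSucc_subset _ _).trans (Ioo_subset_Ioo (by norm_num) (by norm_num)))

lemma oscillatingLayers_inter_ball_neg_one {ε : ℝ} (hε : ε ≤ 1) :
    oscillatingLayers ∩ ball (-1) ε =
      ball (-1) ε ∩ rightLayers (-1) invFactSucc {k | Even k} := by
  have hdisj : Disjoint (rightLayers 1 invFactSucc {k | Even k}ᶜ) (ball (-1) ε) :=
    Set.disjoint_left.2 fun x hx hx' => by
      rw [Real.ball_eq_Ioo] at hx'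
      linarith [(rightLayers_invFactSucc_subset _ _ hx).1, hx'.2]
  rw [oscillatingLayers, union_inter_distrib_right, hdisj.inter_eq, union_empty, inter_comm]

lemma oscillatingLayers_inter_ball_one {ε : ℝ} (hε : ε ≤ 1) :
    oscillatingLayers ∩ ball 1 ε = ball 1 ε ∩ rightLayers 1 invFactSucc {k | Even k}ᶜ := by
  have hdisj : Disjoint (rightLayers (-1) invFactSucc {k | Even k}) (ball 1 ε) :=
    Set.disjoint_left.2 fun x hx hx' => by
      rw [Real.ball_eq_Ioo] at hx'
      linarith [(rightLayers_invFactSucc_subset _ _ hx).2, hx'.1]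
  rw [oscillatingLayers, union_inter_distrib_right, hdisj.inter_eq, empty_union, inter_comm]

lemma volume_oscillatingLayers_ne_top : volume oscillatingLayers ≠ ⊤ :=
  ((measure_mono oscillatingLayers_subset_Ioo).trans_lt measure_Ioo_lt_top).ne

lemma volume_oscillatingLayers_ne_zero : volume oscillatingLayers ≠ 0 :=
  ((volume_ball_inter_rightLayers_pos (-1) _ strictAnti_invFactSucc invFactSucc_pos
    (tendsto_invFactSucc.mono_right nhdsWithin_le_nhds) Nat.frequently_even one_pos).trans_le
    (measure_mono fun _ hx => Or.inl hx.2)).ne'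

def oscillatingMeasure : Measure ℝ := volume[|oscillatingLayers]

lemma isProbabilityMeasure_oscillatingMeasure : IsProbabilityMeasure oscillatingMeasure :=
  cond_isProbabilityMeasure_of_finite volume_oscillatingLayers_ne_zero
    volume_oscillatingLayers_ne_top

lemma neg_one_mem_measureSupport_oscillatingMeasure :
    (-1 : ℝ) ∈ measureSupport oscillatingMeasure :=
  mem_measureSupport_cond measurableSet_oscillatingLayers volume_oscillatingLayers_ne_top
    fun _ hr => (volume_ball_inter_rightLayers_pos (-1) _ strictAnti_invFactSucc invFactSucc_pos
      (tendsto_invFactSucc.mono_right nhdsWithin_le_nhds) Nat.frequently_even hr).trans_le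
        (measure_mono fun _ hx => ⟨Or.inl hx.2, hx.1⟩)

lemma one_mem_measureSupport_oscillatingMeasure : (1 : ℝ) ∈ measureSupport oscillatingMeasure :=
  mem_measureSupport_cond measurableSet_oscillatingLayers volume_oscillatingLayers_ne_top
    fun _ hr => (volume_ball_inter_rightLayers_pos 1 _ strictAnti_invFactSucc invFactSucc_pos
      (tendsto_invFactSucc.mono_right nhdsWithin_le_nhds)
        (Nat.frequently_odd.mono fun _ => Nat.not_even_iff_odd.2) hr).trans_le
        (measure_mono fun _ hx => ⟨Or.inr hx.2, hx.1⟩)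

def ballRatio (μ : Measure ℝ) (ε : ℝ) : ℝ≥0∞ := μ (ball (-1) ε) / μ (ball 1 ε)

lemma ballRatio_oscillatingMeasure (k : ℕ) :
    ballRatio oscillatingMeasure (invFactSucc k) =
      volume (ball (-1) (invFactSucc k) ∩ rightLayers (-1) invFactSucc {k | Even k}) /
        volume (ball 1 (invFactSucc k) ∩ rightLayers 1 invFactSucc {k | Even k}ᶜ) := by
  have hk : invFactSucc k ≤ 1 := by
    simpa [invFactSucc] using strictAnti_invFactSucc.antitone k.zero_le
  rw [ballRatio, oscillatingMeasure, cond_apply measurableSet_oscillatingLayers,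
    cond_apply measurableSet_oscillatingLayers, oscillatingLayers_inter_ball_neg_one hk,
    oscillatingLayers_inter_ball_one hk, ENNReal.mul_div_mul_left _ _
      (ENNReal.inv_ne_zero.2 volume_oscillatingLayers_ne_top)
      (ENNReal.inv_ne_top.2 volume_oscillatingLayers_ne_zero)]

lemma le_ballRatio_oscillatingMeasure {k : ℕ} (hk : Even k) :
    ((k + 1 : ℕ) : ℝ≥0∞) ≤ ballRatio oscillatingMeasure (invFactSucc k) := by
  rw [ballRatio_oscillatingMeasure, ← ofReal_invFactSucc_sub_div]
  exact ofReal_div_le_volume_ratio _ _ _ strictAnti_invFactSucc invFactSucc_pos hk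

lemma ballRatio_oscillatingMeasure_le {k : ℕ} (hk : ¬Even k) :
    ballRatio oscillatingMeasure (invFactSucc k) ≤ ((k + 1 : ℕ) : ℝ≥0∞)⁻¹ := by
  rw [ballRatio_oscillatingMeasure, ← ofReal_invFactSucc_sub_div,
    ENNReal.inv_div (Or.inl ENNReal.ofReal_ne_top)
      (Or.inl (ENNReal.ofReal_pos.2 (invFactSucc_pos _)).ne')]
  exact volume_ratio_le_ofReal_div _ _ _ strictAnti_invFactSucc invFactSucc_pos hk

lemma tendsto_ballRatio_oscillatingMeasure_even :
    Tendsto (fun n => ballRatio oscillatingMeasure (invFactSucc (2 * n))) atTop (𝓝 ⊤) :=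
  tendsto_nhds_top_mono ENNReal.tendsto_nat_nhds_top <| .of_forall fun n =>
    (Nat.cast_le.2 (by omega)).trans (le_ballRatio_oscillatingMeasure (even_two_mul n))

lemma tendsto_ballRatio_oscillatingMeasure_odd :
    Tendsto (fun n => ballRatio oscillatingMeasure (invFactSucc (2 * n + 1))) atTop (𝓝 0) :=
  tendsto_of_tendsto_of_tendsto_of_le_of_le tendsto_const_nhds ENNReal.tendsto_inv_nat_nhds_zero
    (fun _ => zero_le) fun n =>
      (ballRatio_oscillatingMeasure_le (Nat.not_even_two_mul_add_one n)).trans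
        (ENNReal.inv_le_inv.2 (Nat.cast_le.2 (by omega)))

theorem exists_measure_liminf_zero_limsup_top :
    ∃ μ : Measure ℝ, IsProbabilityMeasure μ ∧ μ ≪ MeasureTheory.volume ∧
      (-1 : ℝ) ∈ measureSupport μ ∧ (1 : ℝ) ∈ measureSupport μ ∧
      Filter.liminf
        (fun ε : ℝ => μ (Metric.ball (-1) ε) / μ (Metric.ball 1 ε)) (𝓝[>] 0) = 0 ∧
      Filter.limsup
        (fun ε : ℝ => μ (Metric.ball (-1) ε) / μ (Metric.ball 1 ε)) (𝓝[>] 0) = ⊤ := by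
  have htendsto (m : ℕ) : Tendsto (fun n => invFactSucc (2 * n + m)) atTop (𝓝[>] 0) :=
    tendsto_invFactSucc.comp (StrictMono.tendsto_atTop fun _ _ h => by omega)
  refine ⟨oscillatingMeasure, isProbabilityMeasure_oscillatingMeasure, cond_absolutelyContinuous,
    neg_one_mem_measureSupport_oscillatingMeasure, one_mem_measureSupport_oscillatingMeasure,
    ?_, ?_⟩
  · exact le_antisymm
      (liminf_le_of_tendsto_comp (htendsto 1) tendsto_ballRatio_oscillatingMeasure_odd) zero_le
  · exact top_unique
      (le_limsup_of_tendsto_comp (htendsto 0) tendsto_ballRatio_oscillatingMeasure_even)
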